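/- Let α and β be nonzero real numbers at least one of which is rational. Suppose f : ℝ → ℂ is measurable, d_1, d_2, d_3, d_4 ∈ ℂ are not all zero, d_1 f(x) + d_2 f(x+1) + d_3 f(x) e^{2πiαx} + d_4 f(x+1) e^{2πiβx} = 0 for almost every x ∈ ℝ, and lim_{|n|→∞, n∈ℤ} |f(x+n)| = 0 for almost every x ∈ ℝ. Then f = 0 almost everywhere. -/

import Mathlib

set_option maxHeartbeats 1000000

open MeasureTheory Filter Metric

/-- `e t = e^{2πit}`. -/
noncomputable def e (t : ℝ) : ℂ := Complex.exp (2 * Real.pi * Complex.I * t)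

/-- Distance from a real number to the nearest integer. -/
noncomputable def distNearestInt (t : ℝ) : ℝ := |t - round t|

lemma e_add (s t : ℝ) : e (s + t) = e s * e t := by
  simp [e, ← Complex.exp_add]; ring_nf

lemma e_ne_zero (t : ℝ) : e t ≠ 0 := Complex.exp_ne_zero _

lemma e_int (n : ℤ) : e n = 1 := by
  simp [e]
  rw [show 2 * (Real.pi:ℂ) * Complex.I * n = n * (2 * Real.pi * Complex.I) by ring]
  exact Complex.exp_int_mul_two_pi_mul_I n

lemma e_add_int (s : ℝ) (n : ℤ) : e (s + n) = e s := by
  rw [e_add, e_int, mul_one]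

lemma abs_e (t : ℝ) : ‖e t‖ = 1 := by
  simp [e, Complex.norm_exp]



lemma e_inj {s t : ℝ} (h : e s = e t) : ∃ n : ℤ, s = t + n := by
  rw [e, e, Complex.exp_eq_exp_iff_exists_int] at h
  obtain ⟨n, hn⟩ := h
  refine ⟨n, ?_⟩
  have hπ : (2 * (Real.pi:ℂ) * Complex.I) ≠ 0 := by
    simp [Real.pi_ne_zero, Complex.I_ne_zero]
  have : (2 * (Real.pi:ℂ) * Complex.I) * s = (2 * (Real.pi:ℂ) * Complex.I) * (t + n) := by
    rw [hn]; ring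
  have := mul_left_cancel₀ hπ this
  exact_mod_cast this

lemma null_zero_set (c d : ℂ) (γ : ℝ) (hγ : γ ≠ 0) (hcd : ¬ (c = 0 ∧ d = 0)) :
    volume {x : ℝ | c + d * e (γ * x) = 0} = 0 := by
  by_cases hd : d = 0
  · have hc : c ≠ 0 := fun h => hcd ⟨h, hd⟩
    convert measure_empty (μ := volume)
    ext x; simp [hd, hc]
  · rcases Set.eq_empty_or_nonempty {x : ℝ | c + d * e (γ * x) = 0} with h | ⟨x₀, hx₀⟩
    · simp [h]
    · have hsub : {x : ℝ | c + d * e (γ * x) = 0} ⊆ Set.range (fun n : ℤ => x₀ + n / γ) := by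
        intro x hx
        have h1 : d * e (γ * x) = d * e (γ * x₀) := by
          have := hx₀
          simp only [Set.mem_setOf_eq] at hx this
          rw [show d * e (γ * x) = -c by linear_combination hx,
            show d * e (γ * x₀) = -c by linear_combination this]
        have h2 : e (γ * x) = e (γ * x₀) := mul_left_cancel₀ hd h1
        obtain ⟨n, hn⟩ := e_inj h2
        exact ⟨n, by field_simp; linarith [hn]⟩
      exact measure_mono_null hsub (Set.Countable.measure_zero (Set.countable_range _) _)


lemma periodic_shift (g : ℤ → ℝ) (N : ℕ) (hper : ∀ k : ℤ, g (k + N) = g k) :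
    ∀ (m : ℕ) (k : ℤ), g (k + N * m) = g k := by
  intro m
  induction m with
  | zero => simp
  | succ m ih =>
    intro k
    have : (k : ℤ) + N * ((m:ℕ) + 1 : ℕ) = (k + N * m) + N := by push_cast; ring
    rw [this, hper, ih]

lemma periodic_reflect (g : ℤ → ℝ) (N : ℕ) (hper : ∀ k : ℤ, g (k + N) = g k) (M : ℕ) :
    ∑ k ∈ Finset.range (N * M), g (-(k + 1)) = ∑ k ∈ Finset.range (N * M), g k := by
  set P := N * M with hP
  have h1 : ∀ k ∈ Finset.range P, g (-(k + 1) : ℤ) = g ((P : ℤ) - 1 - k) := by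
    intro k hk
    have : ((P : ℤ) - 1 - k) = (-(k + 1) : ℤ) + N * M := by push_cast [hP]; ring
    rw [this, periodic_shift g N hper]
  rw [Finset.sum_congr rfl h1]
  have h2 : ∀ k ∈ Finset.range P, g ((P : ℤ) - 1 - k) = (fun j : ℕ => g j) (P - 1 - k) := by
    intro k hk
    simp only [Finset.mem_range] at hk
    congr 1
    omega
  rw [Finset.sum_congr rfl h2, Finset.sum_range_reflect (fun j : ℕ => g j) P]


lemma dense_int_add_zsmul (γ : ℝ) (hirr : Irrational γ) :
    Dense ((AddSubgroup.closure {1, γ} : AddSubgroup ℝ) : Set ℝ) := by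
  rcases AddSubgroup.dense_or_cyclic (AddSubgroup.closure {1, γ}) with h | ⟨a, ha⟩
  · exact h
  · exfalso
    have h1 : (1:ℝ) ∈ AddSubgroup.closure ({1, γ} : Set ℝ) :=
      AddSubgroup.subset_closure (by simp)
    have hγ : γ ∈ AddSubgroup.closure ({1, γ} : Set ℝ) :=
      AddSubgroup.subset_closure (by simp)
    rw [ha, AddSubgroup.mem_closure_singleton] at h1 hγ
    obtain ⟨n, hn⟩ := h1
    obtain ⟨m, hm⟩ := hγ
    have hn0 : n ≠ 0 := by rintro rfl; simp at hn
    have ha0 : a ≠ 0 := by rintro rfl; simp at hn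
    refine hirr ⟨(m : ℚ) / (n : ℚ), ?_⟩
    have : (n:ℝ) * a = 1 := by simpa [zsmul_eq_mul] using hn
    have hm' : (m:ℝ) * a = γ := by simpa [zsmul_eq_mul] using hm
    have hγn : γ * n = m := by
      calc γ * n = (m * a) * n := by rw [hm']
        _ = (m : ℝ) * (n * a) := by ring
        _ = m := by rw [this]; ring
    push_cast
    field_simp
    linarith [hγn]

lemma null_or_conull (A : Set ℝ) (hA : MeasurableSet A) (γ : ℝ) (hirr : Irrational γ)
    (h1 : ∀ x, x + 1 ∈ A ↔ x ∈ A) (hγinv : ∀ x, x + γ ∈ A ↔ x ∈ A) :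
    volume A = 0 ∨ volume Aᶜ = 0 := by
  by_contra hcon
  push_neg at hcon
  obtain ⟨h0, hc0⟩ := hcon
  -- the period group
  set S : AddSubgroup ℝ :=
    { carrier := {d : ℝ | ∀ x, x + d ∈ A ↔ x ∈ A}
      zero_mem' := by simp
      add_mem' := by
        intro u v hu hv x
        rw [show x + (u + v) = (x + u) + v by ring, hv, hu]
      neg_mem' := by
        intro u hu x
        have := hu (x + -u)
        rw [show x + -u + u = x by ring] at this
        exact this.symm } with hS
  have hdense : Dense (S : Set ℝ) := by
    have hle : AddSubgroup.closure ({1, γ} : Set ℝ) ≤ S := by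
      rw [AddSubgroup.closure_le]
      rintro d (rfl | rfl)
      · exact h1
      · exact hγinv
    exact (dense_int_add_zsmul γ hirr).mono hle
  -- density points
  have hres : (volume.restrict A) ≠ 0 := by
    intro h
    exact h0 (by simpa using congrArg (fun μ : Measure ℝ => μ Set.univ) h)
  have hresc : (volume.restrict Aᶜ) ≠ 0 := by
    intro h
    exact hc0 (by simpa using congrArg (fun μ : Measure ℝ => μ Set.univ) h)
  have hbesA := Besicovitch.ae_tendsto_measure_inter_div (volume : Measure ℝ) A
  have hbesB := Besicovitch.ae_tendsto_measure_inter_div (volume : Measure ℝ) Aᶜ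
  have : (ae (volume.restrict A)).NeBot := ae_neBot.mpr hres
  have : (ae (volume.restrict Aᶜ)).NeBot := ae_neBot.mpr hresc
  obtain ⟨a, ha⟩ := hbesA.exists
  obtain ⟨b, hb⟩ := hbesB.exists
  have hlt78 : (ENNReal.ofReal (7/8)) < 1 := ENNReal.ofReal_lt_one.mpr (by norm_num)
  have hevA : ∀ᶠ r in nhdsWithin 0 (Set.Ioi (0:ℝ)),
      ENNReal.ofReal (7/8) * volume (closedBall a r) < volume (A ∩ closedBall a r) := by
    filter_upwards [ha.eventually (lt_mem_nhds hlt78)] with r hr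
    exact ENNReal.mul_lt_of_lt_div hr
  have hevB : ∀ᶠ r in nhdsWithin 0 (Set.Ioi (0:ℝ)),
      ENNReal.ofReal (7/8) * volume (closedBall b r) < volume (Aᶜ ∩ closedBall b r) := by
    filter_upwards [hb.eventually (lt_mem_nhds hlt78)] with r hr
    exact ENNReal.mul_lt_of_lt_div hr
  -- extract δ's
  rw [eventually_nhdsWithin_iff, Metric.eventually_nhds_iff] at hevA hevB
  obtain ⟨δ₁, hδ₁, hA1⟩ := hevA
  obtain ⟨δ₂, hδ₂, hB1⟩ := hevB
  set r := min δ₁ δ₂ / 2 with hr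
  have hrpos : 0 < r := by positivity
  have hrδ₁ : r < δ₁ := by
    have : r ≤ δ₁ / 2 := by
      rw [hr]; gcongr; exact min_le_left _ _
    linarith
  have hrδ₂ : 3/2 * r < δ₂ := by
    have : r ≤ δ₂ / 2 := by
      rw [hr]; gcongr; exact min_le_right _ _
    linarith
  have hPa : ENNReal.ofReal (7/8) * volume (closedBall a r) < volume (A ∩ closedBall a r) := by
    exact hA1 (by rw [Real.dist_eq, sub_zero, abs_of_pos hrpos]; exact hrδ₁) hrpos
  have hPb : ENNReal.ofReal (7/8) * volume (closedBall b (3/2 * r)) <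
      volume (Aᶜ ∩ closedBall b (3/2 * r)) := by
    exact hB1 (by rw [Real.dist_eq, sub_zero, abs_of_pos (by linarith)]; exact hrδ₂)
      (by simp only [Set.mem_Ioi]; linarith)
  -- pick d in S close to b - a
  obtain ⟨d, hdS, hdd⟩ : ∃ d ∈ (S : Set ℝ), dist (b - a) d < r / 2 := by
    have := hdense (b - a)
    rw [Metric.mem_closure_iff] at this
    obtain ⟨d, hd1, hd2⟩ := this (r/2) (by linarith)
    exact ⟨d, hd1, hd2⟩
  -- translation invariance
  have htrans : volume (A ∩ closedBall (a + d) r) = volume (A ∩ closedBall a r) := by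
    have hpre : (fun x => x + d) ⁻¹' (A ∩ closedBall (a + d) r) = A ∩ closedBall a r := by
      ext x
      simp only [Set.mem_preimage, Set.mem_inter_iff, Metric.mem_closedBall]
      constructor
      · rintro ⟨hxA, hxB⟩
        refine ⟨(hdS x).mp hxA, ?_⟩
        rwa [Real.dist_eq, show x + d - (a + d) = x - a by ring, ← Real.dist_eq] at hxB
      · rintro ⟨hxA, hxB⟩
        refine ⟨(hdS x).mpr hxA, ?_⟩
        rwa [Real.dist_eq, show x + d - (a + d) = x - a by ring, ← Real.dist_eq]
    rw [← hpre, measure_preimage_add_right]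
  -- inclusion
  have hincl : closedBall (a + d) r ⊆ closedBall b (3/2 * r) := by
    intro y hy
    rw [Metric.mem_closedBall] at hy ⊢
    have h1' : dist (a + d) b < r / 2 := by
      rw [Real.dist_eq, show a + d - b = -((b-a) - d) by ring, abs_neg, ← Real.dist_eq]
      exact hdd
    calc dist y b ≤ dist y (a + d) + dist (a + d) b := dist_triangle _ _ _
      _ ≤ r + r/2 := by gcongr <;> linarith
      _ ≤ 3/2 * r := by linarith
  -- contradiction
  have hchain : ENNReal.ofReal (7/8) * volume (closedBall a r) <
      volume (A ∩ closedBall b (3/2 * r)) := by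
    calc ENNReal.ofReal (7/8) * volume (closedBall a r)
        < volume (A ∩ closedBall (a + d) r) := htrans ▸ hPa
      _ ≤ volume (A ∩ closedBall b (3/2 * r)) := measure_mono (Set.inter_subset_inter_right _ hincl)
  have hsum : volume (A ∩ closedBall b (3/2 * r)) + volume (Aᶜ ∩ closedBall b (3/2 * r)) =
      volume (closedBall b (3/2 * r)) := by
    rw [Set.inter_comm A, ← Set.diff_eq_compl_inter]
    exact measure_inter_add_diff _ hA
  rw [Real.volume_closedBall] at hchain hPb
  have hfinal := ENNReal.add_lt_add hchain hPb
  rw [hsum, Real.volume_closedBall] at hfinal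
  rw [← ENNReal.ofReal_mul (by norm_num), ← ENNReal.ofReal_mul (by norm_num),
    ← ENNReal.ofReal_add (by positivity) (by positivity)] at hfinal
  rw [ENNReal.ofReal_lt_ofReal_iff (by positivity)] at hfinal
  linarith


lemma conj_e (t : ℝ) : (starRingEnd ℂ) (e t) = e (-t) := by
  rw [e, e, ← Complex.exp_conj]
  congr 1
  simp only [map_mul, Complex.conj_I, Complex.conj_ofReal, map_ofNat]
  push_cast
  ring

noncomputable def phi (c d : ℂ) (t : ℝ) : ℝ := Real.log (‖c + d * e t‖)

lemma exists_reflect (c d : ℂ) : ∃ t₀ : ℝ, ∀ t, phi c d (2*t₀ - t) = phi c d t := by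
  by_cases hc : c = 0
  · refine ⟨0, fun t => ?_⟩
    simp [phi, hc, map_mul, abs_e]
  by_cases hd : d = 0
  · exact ⟨0, fun t => by simp [phi, hd]⟩
  · set u : ℂ := c^2 * (starRingEnd ℂ) d / (((‖c‖ : ℝ) : ℂ)^2 * d) with hu
    have habsc : ‖c‖ ≠ 0 := by simpa using hc
    have habsu : ‖u‖ = 1 := by
      rw [hu, norm_div, norm_mul, norm_mul, norm_pow, norm_pow]
      simp only [Complex.norm_conj, Complex.norm_real, Real.norm_eq_abs]
      rw [_root_.abs_of_nonneg (norm_nonneg c)]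
      have h9 : ‖c‖ ^ 2 * ‖d‖ ≠ 0 :=
        mul_ne_zero (pow_ne_zero 2 habsc) (by simpa using hd)
      exact div_self h9
    have hune : u ≠ 0 := by
      intro h; rw [h] at habsu; simp at habsu
    refine ⟨u.arg / (4*Real.pi), fun t => ?_⟩
    have he2t0 : e (2 * (u.arg / (4*Real.pi))) = u := by
      have : (2 : ℂ) * Real.pi * Complex.I * (2 * (u.arg / (4*Real.pi)) : ℝ) = u.arg * Complex.I := by
        push_cast
        have hπ : (Real.pi : ℂ) ≠ 0 := by exact_mod_cast Real.pi_ne_zero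
        field_simp
        ring
      rw [e, this]
      conv_rhs => rw [← Complex.norm_mul_exp_arg_mul_I u]
      rw [habsu]
      simp
    have hkey : c + d * e (2 * (u.arg / (4*Real.pi)) - t)
        = (c / (starRingEnd ℂ) c) * (starRingEnd ℂ) (c + d * e t) := by
      have h1 : e (2 * (u.arg / (4*Real.pi)) - t) = u * e (-t) := by
        rw [show 2 * (u.arg / (4*Real.pi)) - t = 2 * (u.arg / (4*Real.pi)) + (-t) by ring,
          e_add, he2t0]
      have hcc : (starRingEnd ℂ) c ≠ 0 := by simpa using hc
      have hmc : ((‖c‖ : ℝ) : ℂ)^2 = c * (starRingEnd ℂ) c := by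
        rw [Complex.mul_conj]
        norm_cast
        rw [Complex.sq_norm]
      have hKne : ((‖c‖ : ℝ) : ℂ)^2 ≠ 0 := by
        rw [hmc]; exact mul_ne_zero hc hcc
      have hdu : d * u = c * (starRingEnd ℂ) d / (starRingEnd ℂ) c := by
        rw [hu]
        field_simp
        rw [hmc]
        field_simp
      rw [h1, map_add, map_mul, conj_e]
      calc c + d * (u * e (-t)) = c + (d * u) * e (-t) := by ring
        _ = c + (c * (starRingEnd ℂ) d / (starRingEnd ℂ) c) * e (-t) := by rw [hdu]
        _ = (c / (starRingEnd ℂ) c) * ((starRingEnd ℂ) c + (starRingEnd ℂ) d * e (-t)) := by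
            field_simp
    rw [phi, phi, hkey, norm_mul, Complex.norm_conj]
    have habs1 : ‖c / (starRingEnd ℂ) c‖ = 1 := by
      rw [norm_div, Complex.norm_conj, div_self habsc]
    rw [habs1, one_mul]

noncomputable def GG (c d : ℂ) (γ : ℝ) (N : ℕ) (M : ℕ) (v : ℝ) : ℝ :=
  (∑ k ∈ Finset.range (N*M), phi c d (v + γ*k)) - (∑ k ∈ Finset.range (N*M), phi c d (v - γ*(k+1)))

lemma phi_add_int (c d : ℂ) (t : ℝ) (n : ℤ) : phi c d (t + n) = phi c d t := by
  rw [phi, phi, e_add_int]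

lemma GG_add_int (c d : ℂ) (γ : ℝ) (N M : ℕ) (v : ℝ) (n : ℤ) :
    GG c d γ N M (v + n) = GG c d γ N M v := by
  unfold GG
  congr 1
  · exact Finset.sum_congr rfl fun k _ => by
      rw [show v + (n:ℝ) + γ*k = (v + γ*k) + n by ring, phi_add_int]
  · exact Finset.sum_congr rfl fun k _ => by
      rw [show v + (n:ℝ) - γ*(k+1) = (v - γ*(k+1)) + n by ring, phi_add_int]

lemma GG_reflect (c d : ℂ) (γ : ℝ) (N M : ℕ) (t₀ : ℝ)
    (ht₀ : ∀ t, phi c d (2*t₀ - t) = phi c d t) (v : ℝ) :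
    GG c d γ N M (2*t₀ + γ - v) = - GG c d γ N M v := by
  unfold GG
  have h1 : ∀ k : ℕ, phi c d (2*t₀ + γ - v + γ*k) = phi c d (v - γ*(k+1)) := fun k => by
    rw [show 2*t₀ + γ - v + γ*k = 2*t₀ - (v - γ*(k+1)) by ring, ht₀]
  have h2 : ∀ k : ℕ, phi c d (2*t₀ + γ - v - γ*(k+1)) = phi c d (v + γ*k) := fun k => by
    rw [show 2*t₀ + γ - v - γ*(k+1) = 2*t₀ - (v + γ*k) by ring, ht₀]
  rw [Finset.sum_congr rfl fun k _ => h1 k, Finset.sum_congr rfl fun k _ => h2 k]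
  ring

lemma core (γ : ℝ) (hirr : Irrational γ) (c d : ℂ) (N : ℕ) (U : Set ℝ)
    (hU : MeasurableSet U) (hUpos : volume U ≠ 0) (hUinv : ∀ v, v + γ ∈ U ↔ v ∈ U)
    (hlim : ∀ v ∈ U, Tendsto (fun M : ℕ => GG c d γ N M v) atTop atTop) : False := by
  obtain ⟨t₀, ht₀⟩ := exists_reflect c d
  set U' : Set ℝ := ⋃ n : ℤ, (fun v => v + (n:ℝ)) ⁻¹' U with hU'
  have hU'meas : MeasurableSet U' :=
    MeasurableSet.iUnion fun n => (measurable_add_const _) hU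
  have hU'mem : ∀ v, v ∈ U' ↔ ∃ n : ℤ, v + (n:ℝ) ∈ U := fun v => by
    simp [hU']
  have hUU' : U ⊆ U' := fun v hv => (hU'mem v).mpr ⟨0, by simpa using hv⟩
  have hU'pos : volume U' ≠ 0 := fun h => hUpos (measure_mono_null hUU' h)
  have hU'1 : ∀ v : ℝ, v + 1 ∈ U' ↔ v ∈ U' := by
    intro v
    rw [hU'mem, hU'mem]
    constructor
    · rintro ⟨n, hn⟩
      exact ⟨n + 1, by push_cast; rw [show v + ((n:ℝ) + 1) = v + 1 + n by ring]; exact hn⟩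
    · rintro ⟨n, hn⟩
      exact ⟨n - 1, by push_cast; rw [show v + 1 + ((n:ℝ) - 1) = v + n by ring]; exact hn⟩
  have hU'γ : ∀ v : ℝ, v + γ ∈ U' ↔ v ∈ U' := by
    intro v
    rw [hU'mem, hU'mem]
    constructor
    · rintro ⟨n, hn⟩
      refine ⟨n, ?_⟩
      have := (hUinv (v + n)).mp (by convert hn using 1; ring)
      exact this
    · rintro ⟨n, hn⟩
      refine ⟨n, ?_⟩
      have := (hUinv (v + n)).mpr hn
      convert this using 1; ring
  have hlim' : ∀ v ∈ U', Tendsto (fun M : ℕ => GG c d γ N M v) atTop atTop := by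
    intro v hv
    obtain ⟨n, hn⟩ := (hU'mem v).mp hv
    have := hlim _ hn
    have heq : ∀ M, GG c d γ N M (v + n) = GG c d γ N M v := fun M => GG_add_int c d γ N M v n
    simpa [heq] using this
  -- null or conull
  have hcon : volume U'ᶜ = 0 := by
    rcases null_or_conull U' hU'meas γ hirr hU'1 hU'γ with h | h
    · exact absurd h hU'pos
    · exact h
  -- reflected set
  set ρ : ℝ → ℝ := fun v => (2*t₀ + γ) - v with hρ
  have hρmp : MeasurePreserving ρ (volume : Measure ℝ) volume := by
    exact Measure.measurePreserving_sub_left volume (2*t₀ + γ)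
  have hVc : volume (ρ ⁻¹' U'ᶜ) = 0 := by
    rw [hρmp.measure_preimage hU'meas.compl.nullMeasurableSet]
    exact hcon
  -- pick a point
  have hcompl : volume ((U' ∩ ρ ⁻¹' U')ᶜ) = 0 := by
    rw [Set.compl_inter]
    refine measure_union_null hcon ?_
    rw [← Set.preimage_compl]
    exact hVc
  have hne : (U' ∩ ρ ⁻¹' U').Nonempty := by
    rcases Set.eq_empty_or_nonempty (U' ∩ ρ ⁻¹' U') with h | h
    · exfalso
      rw [h, Set.compl_empty] at hcompl
      simpa using hcompl
    · exact h
  obtain ⟨v, hv1, hv2⟩ := hne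
  have h₁ := hlim' v hv1
  have h₂ := hlim' (ρ v) hv2
  have h₂' : Tendsto (fun M : ℕ => - GG c d γ N M v) atTop atTop := by
    have heq : ∀ M, GG c d γ N M (ρ v) = - GG c d γ N M v := fun M =>
      GG_reflect c d γ N M t₀ ht₀ v
    simpa [heq] using h₂
  obtain ⟨M, hM1, hM2⟩ := ((h₁.eventually_ge_atTop 1).and (h₂'.eventually_ge_atTop 1)).exists
  linarith


lemma pointwise_tendsto (aa bb ff : ℝ → ℂ) (x : ℝ)
    (hrel : ∀ n : ℤ, aa (x + n) * ff (x + n) + bb (x + n) * ff (x + n + 1) = 0)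
    (hane : ∀ n : ℤ, aa (x + n) ≠ 0) (hbne : ∀ n : ℤ, bb (x + n) ≠ 0)
    (hf0 : ff x ≠ 0)
    (hdec : Tendsto (fun n : ℤ => ‖ff (x + n)‖) cofinite (nhds 0)) :
    Tendsto (fun m : ℕ =>
      (∑ k ∈ Finset.range m, (Real.log (‖aa (x + ((-(k+1) : ℤ) : ℝ))‖)
          - Real.log (‖bb (x + ((-(k+1) : ℤ) : ℝ))‖)))
      - (∑ k ∈ Finset.range m, (Real.log (‖aa (x + ((k : ℤ) : ℝ))‖)
          - Real.log (‖bb (x + ((k : ℤ) : ℝ))‖)))) atTop atTop := by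
  set hh : ℤ → ℝ := fun n => Real.log (‖aa (x + n)‖)
    - Real.log (‖bb (x + n)‖) with hhh
  set L : ℤ → ℝ := fun n => Real.log (‖ff (x + n)‖) with hL
  -- nonvanishing along the orbit
  have hfne : ∀ n : ℤ, ff (x + (n:ℝ)) ≠ 0 := by
    intro n
    induction n using Int.induction_on with
    | zero => simpa using hf0
    | succ n ih =>
      have hr := hrel n
      have hcast : x + ((((n:ℤ)+1) : ℤ):ℝ) = x + ((n:ℤ):ℝ) + 1 := by push_cast; ring
      rw [hcast]
      intro h0
      rw [h0, mul_zero, add_zero, mul_eq_zero] at hr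
      exact hr.elim (hane n) ih
    | pred n ih =>
      have hr := hrel (-(n:ℤ)-1)
      have hcast : x + (((-(n:ℤ)-1) : ℤ):ℝ) + 1 = x + ((-(n:ℤ) : ℤ):ℝ) := by push_cast; ring
      rw [hcast] at hr
      intro h0
      rw [h0, mul_zero, zero_add, mul_eq_zero] at hr
      exact hr.elim (hbne _) ih
  have habsa : ∀ n : ℤ, ‖aa (x + n)‖ ≠ 0 := fun n => by
    simpa using hane n
  have habsb : ∀ n : ℤ, ‖bb (x + n)‖ ≠ 0 := fun n => by
    simpa using hbne n
  have habsf : ∀ n : ℤ, ‖ff (x + n)‖ ≠ 0 := fun n => by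
    simpa using hfne n
  -- one step of the recurrence
  have hstep : ∀ n : ℤ, L (n+1) = L n + hh n := by
    intro n
    have hr := hrel n
    have h1 : bb (x + n) * ff (x + n + 1) = -(aa (x + n) * ff (x + n)) := by
      linear_combination hr
    have h2 : ‖bb (x + n)‖ * ‖ff (x + n + 1)‖
        = ‖aa (x + n)‖ * ‖ff (x + n)‖ := by
      rw [← norm_mul, ← norm_mul, h1, norm_neg]
    have hcast : x + ((n+1 : ℤ):ℝ) = x + (n:ℝ) + 1 := by push_cast; ring
    have hfne1 : ‖ff (x + (n:ℝ) + 1)‖ ≠ 0 := by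
      rw [← hcast]; exact habsf (n+1)
    have h3 := congrArg Real.log h2
    rw [Real.log_mul (habsb n) hfne1, Real.log_mul (habsa n) (habsf n)] at h3
    simp only [hL, hhh, hcast]
    linarith
  -- partial sums
  have hFsum : ∀ m : ℕ, L m = L 0 + ∑ k ∈ Finset.range m, hh k := by
    intro m
    induction m with
    | zero => simp
    | succ m ih =>
      rw [Finset.sum_range_succ, show ((m+1 : ℕ):ℤ) = (m:ℤ) + 1 by push_cast; ring,
        hstep m, ih]
      ring
  have hBsum : ∀ m : ℕ, L (-m) = L 0 - ∑ k ∈ Finset.range m, hh (-(k+1)) := by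
    intro m
    induction m with
    | zero => simp
    | succ m ih =>
      have h4 := hstep (-(m+1))
      rw [show (-((m:ℤ)+1) + 1) = -(m:ℤ) by ring] at h4
      rw [Finset.sum_range_succ, show ((-(m+1:ℕ) : ℤ)) = -((m:ℤ)+1) by push_cast; ring,
        show L (-((m:ℤ)+1)) = L (-(m:ℤ)) - hh (-((m:ℤ)+1)) by linarith, ih]
      push_cast
      ring
  -- decay in both directions
  have hcof1 : Tendsto (fun m : ℕ => (m : ℤ)) cofinite cofinite :=
    Function.Injective.tendsto_cofinite (fun a b h => by exact_mod_cast h)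
  have hcof2 : Tendsto (fun m : ℕ => -(m : ℤ)) cofinite cofinite :=
    Function.Injective.tendsto_cofinite (fun a b h => by omega)
  have habs1 : Tendsto (fun m : ℕ => ‖ff (x + ((m:ℤ):ℝ))‖) atTop (nhds 0) := by
    rw [← Nat.cofinite_eq_atTop]
    simpa [Function.comp_def] using hdec.comp hcof1
  have habs2 : Tendsto (fun m : ℕ => ‖ff (x + (Int.cast (-(m:ℤ)) : ℝ))‖) atTop (nhds 0) := by
    rw [← Nat.cofinite_eq_atTop]
    simpa [Function.comp_def] using hdec.comp hcof2
  have hLtop : Tendsto (fun m : ℕ => L m) atTop atBot := by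
    refine Real.tendsto_log_nhdsGT_zero.comp
      (tendsto_nhdsWithin_of_tendsto_nhds_of_eventually_within _ habs1 ?_)
    exact Eventually.of_forall fun m => Set.mem_Ioi.mpr (norm_pos_iff.mpr (hfne m))
  have hLbot : Tendsto (fun m : ℕ => L (-(m:ℤ))) atTop atBot := by
    refine Real.tendsto_log_nhdsGT_zero.comp
      (tendsto_nhdsWithin_of_tendsto_nhds_of_eventually_within _ habs2 ?_)
    exact Eventually.of_forall fun m => Set.mem_Ioi.mpr (norm_pos_iff.mpr (hfne (-(m:ℤ))))
  have hS1 : Tendsto (fun m : ℕ => ∑ k ∈ Finset.range m, hh k) atTop atBot := by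
    have heq : (fun m : ℕ => ∑ k ∈ Finset.range m, hh k) = fun m : ℕ => L m + (- L 0) := by
      funext m; rw [hFsum m]; ring
    rw [heq]
    exact tendsto_atBot_add_const_right atTop (- L 0) hLtop
  have hS2 : Tendsto (fun m : ℕ => ∑ k ∈ Finset.range m, hh (-(k+1))) atTop atTop := by
    have heq : (fun m : ℕ => ∑ k ∈ Finset.range m, hh (-(k+1)))
        = fun m : ℕ => - L (-(m:ℤ)) + L 0 := by
      funext m; rw [hBsum m]; ring
    rw [heq]
    exact tendsto_atTop_add_const_right atTop (L 0)
      (tendsto_neg_atBot_atTop.comp hLbot)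
  have hmain : Tendsto (fun m : ℕ => (∑ k ∈ Finset.range m, hh (-(k+1)))
      - (∑ k ∈ Finset.range m, hh k)) atTop atTop := by
    have := Filter.Tendsto.atTop_add_atTop hS2 (tendsto_neg_atBot_atTop.comp hS1)
    simpa [Function.comp_def, sub_eq_add_neg] using this
  exact hmain

-- the key lemma
lemma key (α β : ℝ) (q : ℚ) (hq : (q:ℝ) = α) (hα : α ≠ 0) (hβ : β ≠ 0)
    (c₁ c₃ c₂ c₄ : ℂ) (hc13 : ¬ (c₁ = 0 ∧ c₃ = 0)) (hc24 : ¬ (c₂ = 0 ∧ c₄ = 0))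
    (f : ℝ → ℂ) (hmeas : Measurable f)
    (hdep : ∀ᵐ x : ℝ, (c₁ + c₃ * e (α*x)) * f x + (c₂ + c₄ * e (β*x)) * f (x+1) = 0)
    (hdecay : ∀ᵐ x : ℝ, Tendsto (fun n : ℤ => ‖f (x + n)‖) cofinite (nhds 0)) :
    f =ᵐ[(volume : Measure ℝ)] 0 := by
  classical
  set N : ℕ := q.den with hNdef
  have hN : 0 < N := q.pos
  have hαN : α * (N:ℝ) = ((q.num : ℤ) : ℝ) := by
    have h0 : ((q.num : ℝ)) / ((q.den : ℝ)) = (q : ℝ) := by exact_mod_cast Rat.num_div_den q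
    have hden : ((q.den:ℝ)) ≠ 0 := by positivity
    rw [← hq, hNdef]
    field_simp at h0 ⊢
    linarith [h0]
  -- coefficient functions
  set aa : ℝ → ℂ := fun y => c₁ + c₃ * e (α * y) with haa
  set bb : ℝ → ℂ := fun y => c₂ + c₄ * e (β * y) with hbb
  have he_meas : ∀ γ : ℝ, Measurable fun x : ℝ => e (γ * x) := by
    intro γ
    apply Continuous.measurable
    unfold e
    exact Complex.continuous_exp.comp (by continuity)
  have haames : Measurable aa := measurable_const.add (measurable_const.mul (he_meas α))
  have hbbmes : Measurable bb := measurable_const.add (measurable_const.mul (he_meas β))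
  -- good sets
  set E₀ : Set ℝ := {x | aa x * f x + bb x * f (x+1) = 0} with hE₀
  have hE₀meas : MeasurableSet E₀ := by
    apply measurableSet_eq_fun
    · exact ((haames.mul hmeas).add (hbbmes.mul (hmeas.comp (measurable_add_const 1))))
    · exact measurable_const
  have hE₀null : volume E₀ᶜ = 0 := by
    have h := hdep
    rw [MeasureTheory.ae_iff] at h
    have hset : E₀ᶜ = {x : ℝ | ¬ ((c₁ + c₃ * e (α*x)) * f x + (c₂ + c₄ * e (β*x)) * f (x+1) = 0)} := by
      ext x; simp [hE₀, haa, hbb]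
    rw [hset]
    exact h
  set Za : Set ℝ := {x | aa x = 0} with hZa
  set Zb : Set ℝ := {x | bb x = 0} with hZb
  have hZameas : MeasurableSet Za := measurableSet_eq_fun haames measurable_const
  have hZbmeas : MeasurableSet Zb := measurableSet_eq_fun hbbmes measurable_const
  have hZanull : volume Za = 0 := null_zero_set c₁ c₃ α hα hc13
  have hZbnull : volume Zb = 0 := null_zero_set c₂ c₄ β hβ hc24
  -- decay set
  have hdecnull : volume {x : ℝ | ¬ Tendsto (fun n : ℤ => ‖f (x + n)‖)
      cofinite (nhds 0)} = 0 := by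
    have h := hdecay
    rw [MeasureTheory.ae_iff] at h
    exact h
  obtain ⟨W, hWsub, hWmeas, hWnull⟩ := exists_measurable_superset_of_null hdecnull
  set D : Set ℝ := Wᶜ with hD
  have hDmeas : MeasurableSet D := hWmeas.compl
  have hDdec : ∀ x ∈ D, Tendsto (fun n : ℤ => ‖f (x + n)‖) cofinite (nhds 0) := by
    intro x hx
    by_contra hcon
    exact hx (hWsub hcon)
  set base : Set ℝ := E₀ ∩ Zaᶜ ∩ Zbᶜ ∩ D with hbase
  have hbasemeas : MeasurableSet base :=
    ((hE₀meas.inter hZameas.compl).inter hZbmeas.compl).inter hDmeas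
  have hbasenull : volume baseᶜ = 0 := by
    rw [hbase]
    simp only [Set.compl_inter, compl_compl]
    refine measure_union_null (measure_union_null (measure_union_null hE₀null hZanull) hZbnull) ?_
    rw [hD, compl_compl]
    exact hWnull
  set Ω : Set ℝ := ⋂ n : ℤ, (fun x : ℝ => x + (n:ℝ)) ⁻¹' base with hΩ
  have hΩmeas : MeasurableSet Ω :=
    MeasurableSet.iInter fun n => hbasemeas.preimage (measurable_add_const _)
  have hΩnull : volume Ωᶜ = 0 := by
    rw [hΩ, Set.compl_iInter]
    refine measure_iUnion_null fun n => ?_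
    rw [← Set.preimage_compl]
    rw [measure_preimage_add_right]
    exact hbasenull
  have hΩmem : ∀ x : ℝ, x ∈ Ω ↔ ∀ n : ℤ, x + (n:ℝ) ∈ base := by
    intro x; simp [hΩ]
  have hΩbase : ∀ x ∈ Ω, x ∈ base := by
    intro x hx
    have := (hΩmem x).mp hx 0
    simpa using this
  have hΩshift : ∀ x ∈ Ω, ∀ m : ℤ, x + (m:ℝ) ∈ Ω := by
    intro x hx m
    rw [hΩmem]
    intro n
    have := (hΩmem x).mp hx (m + n)
    have hcast : x + ((m + n : ℤ):ℝ) = x + (m:ℝ) + (n:ℝ) := by push_cast; ring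
    rwa [hcast] at this
  -- base unpacking
  have hbaserel : ∀ y ∈ base, aa y * f y + bb y * f (y+1) = 0 := fun y hy => hy.1.1.1
  have hbasea : ∀ y ∈ base, aa y ≠ 0 := fun y hy => hy.1.1.2
  have hbaseb : ∀ y ∈ base, bb y ≠ 0 := fun y hy => hy.1.2
  have hbased : ∀ y ∈ base, y ∈ D := fun y hy => hy.2
  -- the nonvanishing set
  set S' : Set ℝ := Ω ∩ {x | f x ≠ 0} with hS'
  have hS'meas : MeasurableSet S' :=
    hΩmeas.inter (measurableSet_eq_fun hmeas measurable_const).compl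
  -- shift invariance of S'
  have hS'iff : ∀ x : ℝ, x + 1 ∈ S' ↔ x ∈ S' := by
    intro x
    constructor
    · rintro ⟨hΩ1, hf1⟩
      have hxΩ : x ∈ Ω := by
        have := hΩshift _ hΩ1 (-1)
        simpa using this
      refine ⟨hxΩ, ?_⟩
      intro h0
      have hr := hbaserel x (hΩbase x hxΩ)
      rw [h0, mul_zero, zero_add, mul_eq_zero] at hr
      exact hr.elim (hbaseb x (hΩbase x hxΩ)) hf1
    · rintro ⟨hΩ0, hf0⟩
      have hx1Ω : x + 1 ∈ Ω := by
        have := hΩshift _ hΩ0 1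
        simpa using this
      refine ⟨hx1Ω, ?_⟩
      intro h0
      have hr := hbaserel x (hΩbase x hΩ0)
      rw [h0, mul_zero, add_zero, mul_eq_zero] at hr
      exact hr.elim (hbasea x (hΩbase x hΩ0)) hf0
  -- central tendsto statement
  have hG : ∀ x ∈ S', Tendsto (fun M : ℕ => GG c₂ c₄ β N M (β * x)) atTop atTop := by
    rintro x ⟨hxΩ, hxf⟩
    have hrel : ∀ n : ℤ, aa (x + n) * f (x + n) + bb (x + n) * f (x + n + 1) = 0 :=
      fun n => hbaserel _ ((hΩmem x).mp hxΩ n)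
    have hane : ∀ n : ℤ, aa (x + n) ≠ 0 := fun n => hbasea _ ((hΩmem x).mp hxΩ n)
    have hbne : ∀ n : ℤ, bb (x + n) ≠ 0 := fun n => hbaseb _ ((hΩmem x).mp hxΩ n)
    have hdec := hDdec x (hbased x (hΩbase x hxΩ))
    have hpt := pointwise_tendsto aa bb f x hrel hane hbne hxf hdec
    -- identity between GG and the sums
    have hper : ∀ k : ℤ, Real.log (‖aa (x + ((k + (N:ℤ) : ℤ):ℝ))‖)
        = Real.log (‖aa (x + (k:ℝ))‖) := by
      intro k
      have hcast : ((k + (N:ℤ) : ℤ) : ℝ) = (k:ℝ) + (N:ℝ) := by push_cast; ring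
      show Real.log (‖c₁ + c₃ * e (α * (x + ((k + (N:ℤ) : ℤ):ℝ)))‖)
          = Real.log (‖c₁ + c₃ * e (α * (x + (k:ℝ)))‖)
      rw [hcast, show α * (x + ((k:ℝ) + (N:ℝ))) = α * (x + (k:ℝ)) + α * (N:ℝ) by ring, hαN,
        e_add_int]
    have hGD : ∀ M : ℕ, GG c₂ c₄ β N M (β*x) =
        (∑ k ∈ Finset.range (N*M), (Real.log (‖aa (x + ((-(k+1) : ℤ) : ℝ))‖)
          - Real.log (‖bb (x + ((-(k+1) : ℤ) : ℝ))‖)))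
        - (∑ k ∈ Finset.range (N*M), (Real.log (‖aa (x + ((k : ℤ) : ℝ))‖)
          - Real.log (‖bb (x + ((k : ℤ) : ℝ))‖))) := by
      intro M
      have hrefl := periodic_reflect (fun n : ℤ => Real.log (‖aa (x + (n:ℝ))‖)) N hper M
      unfold GG
      have h1 : ∀ k ∈ Finset.range (N*M), phi c₂ c₄ (β*x + β*(k:ℕ))
          = Real.log (‖bb (x + ((k:ℤ):ℝ))‖) := by
        intro k _
        rw [hbb, phi]
        simp only
        congr 2
        push_cast; ring
      have h2 : ∀ k ∈ Finset.range (N*M), phi c₂ c₄ (β*x - β*((k:ℕ)+1))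
          = Real.log (‖bb (x + ((-(k+1):ℤ):ℝ))‖) := by
        intro k _
        rw [hbb, phi]
        simp only
        congr 2
        push_cast; ring
      rw [Finset.sum_congr rfl h1, Finset.sum_congr rfl h2,
        Finset.sum_sub_distrib, Finset.sum_sub_distrib]
      have hrefl' : ∑ k ∈ Finset.range (N*M),
          Real.log (‖aa (x + ((-(k+1):ℤ):ℝ))‖)
          = ∑ k ∈ Finset.range (N*M), Real.log (‖aa (x + ((k:ℤ):ℝ))‖) := hrefl
      linarith [hrefl']
    have hNM : Tendsto (fun M : ℕ => N * M) atTop atTop :=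
      tendsto_atTop_mono (fun M => Nat.le_mul_of_pos_left M hN) tendsto_id
    have hcomp := hpt.comp hNM
    have heq : (fun M : ℕ => GG c₂ c₄ β N M (β*x)) = (fun M : ℕ =>
        (∑ k ∈ Finset.range (N*M), (Real.log (‖aa (x + ((-(k+1) : ℤ) : ℝ))‖)
          - Real.log (‖bb (x + ((-(k+1) : ℤ) : ℝ))‖)))
        - (∑ k ∈ Finset.range (N*M), (Real.log (‖aa (x + ((k : ℤ) : ℝ))‖)
          - Real.log (‖bb (x + ((k : ℤ) : ℝ))‖)))) := funext hGD
    rw [heq]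
    exact hcomp
  -- S' is null
  have hS'null : volume S' = 0 := by
    by_cases hbirr : Irrational β
    · by_contra hS'pos
      set U : Set ℝ := (fun v : ℝ => v * β⁻¹) ⁻¹' S' with hU
      have hUmeas : MeasurableSet U := hS'meas.preimage (measurable_mul_const β⁻¹)
      have hUpos : volume U ≠ 0 := by
        rw [hU, Real.volume_preimage_mul_right (inv_ne_zero hβ)]
        refine mul_ne_zero ?_ hS'pos
        simp only [inv_inv, ne_eq, ENNReal.ofReal_eq_zero, not_le]
        exact abs_pos.mpr hβ
      have hUinv : ∀ v : ℝ, v + β ∈ U ↔ v ∈ U := by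
        intro v
        have harg : (v + β) * β⁻¹ = v * β⁻¹ + 1 := by field_simp
        constructor
        · intro hv
          have : (v+β) * β⁻¹ ∈ S' := hv
          rw [harg] at this
          exact (hS'iff _).mp this
        · intro hv
          have : v * β⁻¹ + 1 ∈ S' := (hS'iff _).mpr hv
          show (v+β) * β⁻¹ ∈ S'
          rw [harg]
          exact this
      exact core β hbirr c₂ c₄ N U hUmeas hUpos hUinv (fun v hv => by
        have hx := hG _ hv
        rwa [show β * (v * β⁻¹) = v by field_simp] at hx)
    · -- β rational
      have hrange : β ∈ Set.range ((↑) : ℚ → ℝ) := by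
        by_contra hcon
        exact hbirr hcon
      obtain ⟨p, hp⟩ := hrange
      have : S' = ∅ := by
        rw [Set.eq_empty_iff_forall_notMem]
        intro x hx
        have hGx := hG x hx
        set s : ℕ := p.den with hsdef
        have hs : 0 < s := p.pos
        have hβs : β * (s:ℝ) = ((p.num : ℤ) : ℝ) := by
          have h0 : ((p.num : ℝ)) / ((p.den : ℝ)) = (p : ℝ) := by exact_mod_cast Rat.num_div_den p
          have hden : ((p.den:ℝ)) ≠ 0 := by positivity
          rw [← hp, hsdef]
          field_simp at h0 ⊢
          linarith [h0]
        have hperβ : ∀ k : ℤ, phi c₂ c₄ (β*x + β*((k + (s:ℤ) : ℤ):ℝ)) = phi c₂ c₄ (β*x + β*(k:ℝ)) := by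
          intro k
          have harg : β*x + β*((k + (s:ℤ) : ℤ):ℝ) = (β*x + β*(k:ℝ)) + ((p.num:ℤ):ℝ) := by
            push_cast
            rw [show β*x + β*((k:ℝ) + (s:ℝ)) = β*x + β*(k:ℝ) + β*(s:ℝ) by ring, hβs]
          rw [harg, phi, phi, e_add_int]
        have hzero : ∀ M' : ℕ, GG c₂ c₄ β N (s*M') (β*x) = 0 := by
          intro M'
          unfold GG
          have hrefl := periodic_reflect (fun n : ℤ => phi c₂ c₄ (β*x + β*(n:ℝ))) s hperβ (N*M')
          have h1 : ∀ k ∈ Finset.range (N*(s*M')), phi c₂ c₄ (β*x + β*(k:ℕ))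
              = (fun n : ℤ => phi c₂ c₄ (β*x + β*(n:ℝ))) (k:ℤ) := by
            intro k _
            simp only
            norm_cast
          have h2 : ∀ k ∈ Finset.range (N*(s*M')), phi c₂ c₄ (β*x - β*((k:ℕ)+1))
              = (fun n : ℤ => phi c₂ c₄ (β*x + β*(n:ℝ))) (-(k+1)) := by
            intro k _
            simp only
            congr 1
            push_cast; ring
          rw [Finset.sum_congr rfl h1, Finset.sum_congr rfl h2]
          rw [show N*(s*M') = s*(N*M') by ring]
          rw [hrefl]
          ring
        have h2 := hGx.comp (tendsto_atTop_mono (fun M' => Nat.le_mul_of_pos_left M' hs)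
          (tendsto_id : Tendsto (fun M' : ℕ => M') atTop atTop))
        obtain ⟨M', hM'⟩ := (h2.eventually_ge_atTop 1).exists
        have := hzero M'
        simp only [Function.comp] at hM'
        rw [this] at hM'
        linarith
      rw [this]
      simp
  -- conclude f = 0 a.e.
  have hsub : {x : ℝ | f x ≠ 0} ⊆ S' ∪ Ωᶜ := by
    intro x hx
    by_cases hΩx : x ∈ Ω
    · exact Or.inl ⟨hΩx, hx⟩
    · exact Or.inr hΩx
  have hnull : volume {x : ℝ | ¬ (f x = 0)} = 0 :=
    measure_mono_null hsub (measure_union_null hS'null hΩnull)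
  rw [EventuallyEq, MeasureTheory.ae_iff]
  convert hnull using 2
  simp

lemma ae_comp_sub_left {P : ℝ → Prop} (c : ℝ) (h : ∀ᵐ y : ℝ, P y) : ∀ᵐ x : ℝ, P (c - x) := by
  have hmp := Measure.measurePreserving_sub_left (volume : Measure ℝ) c
  rw [MeasureTheory.ae_iff] at h ⊢
  exact hmp.quasiMeasurePreserving.preimage_null h

lemma ae_comp_add_right {P : ℝ → Prop} (c : ℝ) (h : ∀ᵐ y : ℝ, P y) : ∀ᵐ x : ℝ, P (x + c) := by
  have hmp := measurePreserving_add_right (volume : Measure ℝ) c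
  rw [MeasureTheory.ae_iff] at h ⊢
  exact hmp.quasiMeasurePreserving.preimage_null h

theorem hrt_special_two_two_rational_case
    (α β : ℝ) (hα : α ≠ 0) (hβ : β ≠ 0)
    (hrat : (∃ q : ℚ, (q : ℝ) = α) ∨ (∃ q : ℚ, (q : ℝ) = β))
    (f : ℝ → ℂ) (hmeas : Measurable f)
    (d₁ d₂ d₃ d₄ : ℂ) (hd : ¬ (d₁ = 0 ∧ d₂ = 0 ∧ d₃ = 0 ∧ d₄ = 0))
    (hdep : ∀ᵐ x : ℝ, d₁ * f x + d₂ * f (x + 1) + d₃ * f x * e (α * x)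
            + d₄ * f (x + 1) * e (β * x) = 0)
    (hdecay : ∀ᵐ x : ℝ, Tendsto (fun n : ℤ => ‖f (x + n)‖)
              Filter.cofinite (nhds 0)) :
    f =ᵐ[(volume : Measure ℝ)] 0 := by
  by_cases h13 : d₁ = 0 ∧ d₃ = 0
  · -- first pair vanishes
    have h24 : ¬ (d₂ = 0 ∧ d₄ = 0) := fun h => hd ⟨h13.1, h.1, h13.2, h.2⟩
    have hz := null_zero_set d₂ d₄ β hβ h24
    have hZbc : ∀ᵐ x : ℝ, ¬ (d₂ + d₄ * e (β*x) = 0) := by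
      rw [MeasureTheory.ae_iff]
      simpa using hz
    have h1 : ∀ᵐ x : ℝ, f (x+1) = 0 := by
      filter_upwards [hdep, hZbc] with x hx hbx
      rw [h13.1, h13.2] at hx
      have h2 : (d₂ + d₄ * e (β*x)) * f (x+1) = 0 := by linear_combination hx
      rcases mul_eq_zero.mp h2 with h | h
      · exact absurd h hbx
      · exact h
    have h2 := ae_comp_add_right (P := fun y => f (y + 1) = 0) (-1) h1
    rw [EventuallyEq]
    filter_upwards [h2] with x hx
    rw [show x + -1 + 1 = x by ring] at hx
    simpa using hx
  by_cases h24 : d₂ = 0 ∧ d₄ = 0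
  · have hz := null_zero_set d₁ d₃ α hα h13
    have hZac : ∀ᵐ x : ℝ, ¬ (d₁ + d₃ * e (α*x) = 0) := by
      rw [MeasureTheory.ae_iff]
      simpa using hz
    rw [EventuallyEq]
    filter_upwards [hdep, hZac] with x hx hax
    rw [h24.1, h24.2] at hx
    have h2 : (d₁ + d₃ * e (α*x)) * f x = 0 := by linear_combination hx
    rcases mul_eq_zero.mp h2 with h | h
    · exact absurd h hax
    · simpa using h
  -- main case
  rcases hrat with ⟨q, hq⟩ | ⟨p, hp⟩
  · refine key α β q hq hα hβ d₁ d₃ d₂ d₄ h13 h24 f hmeas ?_ hdecay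
    filter_upwards [hdep] with x hx
    linear_combination hx
  · -- reflect
    set g : ℝ → ℂ := fun x => f (-1 - x) with hg
    have hgmeas : Measurable g := hmeas.comp (measurable_const.sub measurable_id)
    have hdep2 := ae_comp_sub_left (c := -2)
      (P := fun y => d₁ * f y + d₂ * f (y + 1) + d₃ * f y * e (α * y)
            + d₄ * f (y + 1) * e (β * y) = 0) hdep
    have hgdep : ∀ᵐ x : ℝ, (d₂ + (d₄ * e (-2*β)) * e ((-β)*x)) * g x
        + (d₁ + (d₃ * e (-2*α)) * e ((-α)*x)) * g (x+1) = 0 := by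
      filter_upwards [hdep2] with x hx
      have hf1 : f (-2 - x) = g (x+1) := by rw [hg]; congr 1; ring
      have hf2 : f (-2 - x + 1) = g x := by rw [hg]; congr 1; ring
      have he1 : e (α * (-2 - x)) = e (-2*α) * e ((-α)*x) := by
        rw [show α * (-2 - x) = (-2*α) + ((-α)*x) by ring, e_add]
      have he2 : e (β * (-2 - x)) = e (-2*β) * e ((-β)*x) := by
        rw [show β * (-2 - x) = (-2*β) + ((-β)*x) by ring, e_add]
      rw [hf1, hf2, he1, he2] at hx
      linear_combination hx
    have hgdecay : ∀ᵐ x : ℝ, Tendsto (fun n : ℤ => ‖g (x + n)‖)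
        cofinite (nhds 0) := by
      have hd2 := ae_comp_sub_left (c := -1)
        (P := fun y => Tendsto (fun n : ℤ => ‖f (y + n)‖) cofinite (nhds 0)) hdecay
      filter_upwards [hd2] with x hx
      have hneg : Tendsto (fun n : ℤ => -n) (cofinite : Filter ℤ) cofinite :=
        Function.Injective.tendsto_cofinite (fun a b h => by omega)
      have := hx.comp hneg
      convert this using 2 with n
      rw [hg]
      simp only [Function.comp]
      congr 2
      push_cast
      ring
    have hβq : ((-p : ℚ) : ℝ) = -β := by rw [← hp]; push_cast; ring
    have hc13' : ¬ (d₂ = 0 ∧ d₄ * e (-2*β) = 0) := by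
      rintro ⟨h2, h4⟩
      rcases mul_eq_zero.mp h4 with h | h
      · exact h24 ⟨h2, h⟩
      · exact e_ne_zero _ h
    have hc24' : ¬ (d₁ = 0 ∧ d₃ * e (-2*α) = 0) := by
      rintro ⟨h2, h4⟩
      rcases mul_eq_zero.mp h4 with h | h
      · exact h13 ⟨h2, h⟩
      · exact e_ne_zero _ h
    have hkey := key (-β) (-α) (-p) hβq (neg_ne_zero.mpr hβ) (neg_ne_zero.mpr hα)
      d₂ (d₄ * e (-2*β)) d₁ (d₃ * e (-2*α)) hc13' hc24' g hgmeas hgdep hgdecay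
    -- transfer back
    rw [EventuallyEq, MeasureTheory.ae_iff] at hkey ⊢
    have hmp := Measure.measurePreserving_sub_left (volume : Measure ℝ) (-1)
    have hpre : {x : ℝ | ¬ f x = (0:ℝ→ℂ) x} = (fun x => -1 - x) ⁻¹' {y | ¬ g y = (0:ℝ→ℂ) y} := by
      ext x
      simp only [Set.mem_setOf_eq, Set.mem_preimage, hg, Pi.zero_apply]
      constructor
      · intro hfx hgx
        apply hfx
        rw [show x = -1 - (-1 - x) by ring]
        exact hgx
      · intro hgx hfx
        apply hgx
        rw [show -1 - (-1 - x) = x by ring]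
        exact hfx
    rw [hpre]
    exact hmp.quasiMeasurePreserving.preimage_null hkey
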